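/- Let (w_n)_{n∈ℤ} and (v_n)_{n∈ℤ} be bounded sequences of nonzero complex numbers, let (d_n)_{n∈ℤ} be a bounded sequence of complex numbers with XT₁ ≠ T₀X, and let T = T(w_n, v_n, d_n) be the associated bounded block-shift operator on H ⊕ H. If both bilateral weighted shifts T₀ and T₁ are irreducible and for all i, j ∈ ℤ one has lim_{k→∞} ∏_{m=0}^{k} (|w_{j+m}| / |v_{i+m}|) = 0, then T is irreducible. -/

import Mathlib

noncomputable section

open Complex Metric

/-- `ℓ²(ℤ)` over `ℂ`. -/
abbrev Hl : Type := lp (fun _ : ℤ => ℂ) 2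

/-- The standard orthonormal basis of `ℓ²(ℤ)`. -/
def eb (n : ℤ) : Hl := lp.single 2 n 1

/-- The Hilbert space direct sum `H ⊕ H`. -/
abbrev H2 : Type := WithLp 2 (Hl × Hl)

/-- A bounded operator on a Hilbert space is irreducible if the only closed subspaces
invariant under both it and its adjoint are `⊥` and `⊤`. -/
def IsIrreducibleOp {E : Type*} [NormedAddCommGroup E] [InnerProductSpace ℂ E] [CompleteSpace E]
    (A : E →L[ℂ] E) : Prop :=
  ∀ K : Submodule ℂ E, IsClosed (K : Set E) →
    (∀ x ∈ K, A x ∈ K) → (∀ x ∈ K, ContinuousLinearMap.adjoint A x ∈ K) →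
    K = ⊥ ∨ K = ⊤

/-- The block operator `(x, y) ↦ (T₀ x + (X T₁ − T₀ X) y, T₁ y)` on the Hilbert space
direct sum `H₀ ⊕ H₁`. -/
def blockT2 {H0 H1 : Type*} [NormedAddCommGroup H0] [NormedSpace ℂ H0]
    [NormedAddCommGroup H1] [NormedSpace ℂ H1]
    (T0 : H0 →L[ℂ] H0) (T1 : H1 →L[ℂ] H1) (X : H1 →L[ℂ] H0) :
    WithLp 2 (H0 × H1) →L[ℂ] WithLp 2 (H0 × H1) :=
  let E := WithLp.prodContinuousLinearEquiv 2 ℂ H0 H1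
  (E.symm.toContinuousLinearMap).comp
    ((((T0.comp (ContinuousLinearMap.fst ℂ H0 H1)) +
        ((X.comp T1 - T0.comp X).comp (ContinuousLinearMap.snd ℂ H0 H1))).prod
      (T1.comp (ContinuousLinearMap.snd ℂ H0 H1))).comp E.toContinuousLinearMap)

/-- The block operator `T(wₙ, vₙ, dₙ)` on `ℓ²(ℤ) ⊕ ℓ²(ℤ)`. -/
def blockT (T0 T1 X : Hl →L[ℂ] Hl) : H2 →L[ℂ] H2 := blockT2 T0 T1 X

/-! A closed subspace reducing `T = [[T₀, XT₁ - T₀X], [0, T₁]]` is the range of an orthogonal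
projection `P` commuting with `T`. The lower-left corner `Y` of `P` intertwines the shifts,
`Y T₀ = T₁ Y`, so its matrix coefficients `aᵢⱼ = ⟪eᵢ, Y eⱼ⟫` satisfy `vᵢ aᵢⱼ = wⱼ aᵢ₊₁ⱼ₊₁`;
iterating, `|aᵢⱼ| ≤ ‖Y‖ ∏ₘ |wⱼ₊ₘ| / |vᵢ₊ₘ| → 0`, so `Y = 0`. Being self-adjoint, `P` is then
block diagonal, `P = A ⊕ C`, with `A`, `C` projections commuting with `T₀`, `T₁`. By
irreducibility each is `0` or `1`, and `A (XT₁ - T₀X) = (XT₁ - T₀X) C` excludes the mixed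
cases since `XT₁ ≠ T₀X`. -/

open ContinuousLinearMap WithLp
open scoped InnerProductSpace

section Irreducible

variable {E : Type*} [NormedAddCommGroup E] [InnerProductSpace ℂ E] [CompleteSpace E]

open Module.End in
theorem isIrreducibleOp_iff {A : E →L[ℂ] E} :
    IsIrreducibleOp A ↔ ∀ P : E →L[ℂ] E, IsStarProjection P → Commute P A → P = 0 ∨ P = 1 := by
  constructor
  · intro hA P hP hPA
    have hPA' : Commute P (adjoint A) := by
      simpa [hP.isSelfAdjoint.star_eq, star_eq_adjoint] using hPA.star_star
    have hinv := hP.isIdempotentElem.commute_iff.1 hPA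
    have hinv' := hP.isIdempotentElem.commute_iff.1 hPA'
    rcases hA P.range hP.isIdempotentElem.isClosed_range
      (fun x hx => hinv.1 hx) (fun x hx => hinv'.1 hx) with h | h
    · left
      ext x
      simpa [h] using LinearMap.mem_range_self (P : E →ₗ[ℂ] E) x
    · right
      exact (hP.ext_iff (IsStarProjection.one _)).2
        (h.trans (LinearMap.range_eq_top.2 fun x => ⟨x, rfl⟩).symm)
  · intro h K hK hAK hA'K
    have : CompleteSpace K := hK.completeSpace_coe
    have hinv : K ∈ invtSubmodule (A : E →ₗ[ℂ] E) := fun x hx => hAK x hx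
    have hinv' : K ∈ invtSubmodule (adjoint A : E →ₗ[ℂ] E) := fun x hx => hA'K x hx
    have hcomm : Commute K.starProjection A := by
      rw [isStarProjection_starProjection.isIdempotentElem.commute_iff,
        Submodule.range_starProjection, Submodule.ker_starProjection]
      exact ⟨hinv, orthogonal_mem_invtSubmodule hinv'⟩
    rcases h _ isStarProjection_starProjection hcomm with h0 | h1
    · refine Or.inl (Submodule.eq_bot_iff K |>.2 fun x hx => ?_)
      simpa [h0] using (Submodule.starProjection_eq_self_iff.2 hx).symm
    · refine Or.inr (Submodule.eq_top_iff'.2 fun x => ?_)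
      simpa [h1] using K.starProjection_apply_mem x

end Irreducible

section BlockOperators

variable {H₀ H₁ : Type*} [NormedAddCommGroup H₀] [NormedSpace ℂ H₀]
  [NormedAddCommGroup H₁] [NormedSpace ℂ H₁]

def prodMap₂ (A : H₀ →L[ℂ] H₀) (C : H₁ →L[ℂ] H₁) :
    WithLp 2 (H₀ × H₁) →L[ℂ] WithLp 2 (H₀ × H₁) :=
  (prodContinuousLinearEquiv 2 ℂ H₀ H₁).symm.toContinuousLinearMap ∘L A.prodMap C ∘L
    (prodContinuousLinearEquiv 2 ℂ H₀ H₁).toContinuousLinearMap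

variable (H₀ H₁) in
def inl₂ : H₀ →L[ℂ] WithLp 2 (H₀ × H₁) :=
  (prodContinuousLinearEquiv 2 ℂ H₀ H₁).symm.toContinuousLinearMap ∘L inl ℂ H₀ H₁

variable (H₀ H₁) in
def inr₂ : H₁ →L[ℂ] WithLp 2 (H₀ × H₁) :=
  (prodContinuousLinearEquiv 2 ℂ H₀ H₁).symm.toContinuousLinearMap ∘L inr ℂ H₀ H₁

@[simp]
lemma prodMap₂_toLp (A : H₀ →L[ℂ] H₀) (C : H₁ →L[ℂ] H₁) (x : H₀) (y : H₁) :
    prodMap₂ A C (toLp 2 (x, y)) = toLp 2 (A x, C y) := rfl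

@[simp]
lemma inl₂_apply (x : H₀) : inl₂ H₀ H₁ x = toLp 2 (x, 0) := rfl

@[simp]
lemma inr₂_apply (y : H₁) : inr₂ H₀ H₁ y = toLp 2 (0, y) := rfl

lemma prodMap₂_inj {A A' : H₀ →L[ℂ] H₀} {C C' : H₁ →L[ℂ] H₁} :
    prodMap₂ A C = prodMap₂ A' C' ↔ A = A' ∧ C = C' := by
  refine ⟨fun h => ⟨ext fun x => ?_, ext fun y => ?_⟩, fun h => h.1 ▸ h.2 ▸ rfl⟩
  · simpa using congrArg (fun z => (ofLp z).1) (DFunLike.congr_fun h (toLp 2 (x, 0)))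
  · simpa using congrArg (fun z => (ofLp z).2) (DFunLike.congr_fun h (toLp 2 (0, y)))

lemma prodMap₂_mul (A A' : H₀ →L[ℂ] H₀) (C C' : H₁ →L[ℂ] H₁) :
    prodMap₂ A C * prodMap₂ A' C' = prodMap₂ (A * A') (C * C') := rfl

@[simp]
lemma prodMap₂_zero : prodMap₂ (0 : H₀ →L[ℂ] H₀) (0 : H₁ →L[ℂ] H₁) = 0 := rfl

@[simp]
lemma prodMap₂_one : prodMap₂ (1 : H₀ →L[ℂ] H₀) (1 : H₁ →L[ℂ] H₁) = 1 := rfl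

variable {T₀ : H₀ →L[ℂ] H₀} {T₁ : H₁ →L[ℂ] H₁} {X : H₁ →L[ℂ] H₀}

lemma blockT2_toLp (x : H₀) (y : H₁) :
    blockT2 T₀ T₁ X (toLp 2 (x, y)) = toLp 2 (T₀ x + (X ∘L T₁ - T₀ ∘L X) y, T₁ y) := rfl

lemma commute_prodMap₂_blockT2 {A : H₀ →L[ℂ] H₀} {C : H₁ →L[ℂ] H₁}
    (h : Commute (prodMap₂ A C) (blockT2 T₀ T₁ X)) :
    Commute A T₀ ∧ Commute C T₁ ∧ A ∘L (X ∘L T₁ - T₀ ∘L X) = (X ∘L T₁ - T₀ ∘L X) ∘L C := by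
  have h' (x : H₀) (y : H₁) := DFunLike.congr_fun h.eq (toLp 2 (x, y))
  simp only [mul_apply_eq_comp, blockT2_toLp, prodMap₂_toLp, WithLp.toLp.injEq,
    Prod.mk.injEq] at h'
  refine ⟨ext fun x => ?_, ext fun y => ?_, ext fun y => ?_⟩
  · simpa using (h' x 0).1
  · simpa using (h' 0 y).2
  · simpa using (h' 0 y).1

lemma lowerLeft_comp_of_commute {P : WithLp 2 (H₀ × H₁) →L[ℂ] WithLp 2 (H₀ × H₁)}
    (h : Commute P (blockT2 T₀ T₁ X)) :
    (sndL 2 ℂ H₀ H₁ ∘L P ∘L inl₂ H₀ H₁) ∘L T₀ = T₁ ∘L (sndL 2 ℂ H₀ H₁ ∘L P ∘L inl₂ H₀ H₁) := by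
  ext x
  have hx := congrArg WithLp.snd (DFunLike.congr_fun h.eq (toLp 2 (x, 0)))
  have hT (z : WithLp 2 (H₀ × H₁)) : (blockT2 T₀ T₁ X z).snd = T₁ z.snd := rfl
  simpa [mul_apply_eq_comp, blockT2_toLp, hT] using hx

end BlockOperators

section HilbertBlockOperators

variable {H₀ H₁ : Type*} [NormedAddCommGroup H₀] [InnerProductSpace ℂ H₀] [CompleteSpace H₀]
  [NormedAddCommGroup H₁] [InnerProductSpace ℂ H₁] [CompleteSpace H₁]

lemma adjoint_prodMap₂ (A : H₀ →L[ℂ] H₀) (C : H₁ →L[ℂ] H₁) :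
    adjoint (prodMap₂ A C) = prodMap₂ (adjoint A) (adjoint C) := by
  refine ((eq_adjoint_iff _ _).2 fun z z' => ?_).symm
  simp [prodMap₂, adjoint_inner_left]

lemma IsStarProjection.of_prodMap₂ {A : H₀ →L[ℂ] H₀} {C : H₁ →L[ℂ] H₁}
    (h : IsStarProjection (prodMap₂ A C)) : IsStarProjection A ∧ IsStarProjection C := by
  have hidem := prodMap₂_inj.1 ((prodMap₂_mul A A C C).symm.trans h.isIdempotentElem.eq)
  have hsa := prodMap₂_inj.1 ((adjoint_prodMap₂ A C).symm.trans h.isSelfAdjoint.adjoint_eq)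
  exact ⟨⟨hidem.1, hsa.1⟩, ⟨hidem.2, hsa.2⟩⟩

lemma exists_eq_prodMap₂_of_lowerLeft_eq_zero {P : WithLp 2 (H₀ × H₁) →L[ℂ] WithLp 2 (H₀ × H₁)}
    (hP : IsSelfAdjoint P) (h : sndL 2 ℂ H₀ H₁ ∘L P ∘L inl₂ H₀ H₁ = 0) :
    ∃ A C, P = prodMap₂ A C := by
  have hlower (x : H₀) : (P (toLp 2 (x, 0))).snd = 0 := DFunLike.congr_fun h x
  -- the upper-right corner is the adjoint of the lower-left one
  have hupper (y : H₁) : (P (toLp 2 (0, y))).fst = 0 := by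
    refine ext_inner_left ℂ fun x => ?_
    have := hP.isSymmetric (toLp 2 (x, 0)) (toLp 2 (0, y))
    simp_all
  refine ⟨fstL 2 ℂ H₀ H₁ ∘L P ∘L inl₂ H₀ H₁, sndL 2 ℂ H₀ H₁ ∘L P ∘L inr₂ H₀ H₁, ?_⟩
  ext ⟨x, y⟩
  have hsplit : toLp 2 (x, y) = toLp 2 (x, 0) + toLp 2 ((0 : H₀), y) := by
    simp [← WithLp.toLp_add]
  rw [hsplit, map_add]
  refine WithLp.ofLp_injective 2 (Prod.ext ?_ ?_) <;> simp [hlower, hupper]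

theorem isIrreducibleOp_blockT2 {T₀ : H₀ →L[ℂ] H₀} {T₁ : H₁ →L[ℂ] H₁} {X : H₁ →L[ℂ] H₀}
    (h₀ : IsIrreducibleOp T₀) (h₁ : IsIrreducibleOp T₁) (hX : X ∘L T₁ ≠ T₀ ∘L X)
    (hY : ∀ Y : H₀ →L[ℂ] H₁, Y ∘L T₀ = T₁ ∘L Y → Y = 0) :
    IsIrreducibleOp (blockT2 T₀ T₁ X) := by
  refine isIrreducibleOp_iff.2 fun P hP hPT => ?_
  obtain ⟨A, C, rfl⟩ := exists_eq_prodMap₂_of_lowerLeft_eq_zero hP.isSelfAdjoint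
    (hY _ (lowerLeft_comp_of_commute hPT))
  obtain ⟨hA, hC⟩ := hP.of_prodMap₂
  obtain ⟨hAT, hCT, hAC⟩ := commute_prodMap₂_blockT2 hPT
  rcases isIrreducibleOp_iff.1 h₀ A hA hAT with rfl | rfl <;>
    rcases isIrreducibleOp_iff.1 h₁ C hC hCT with rfl | rfl
  · simp
  · exact absurd (sub_eq_zero.1 (by simpa [one_def] using hAC.symm)) hX
  · exact absurd (sub_eq_zero.1 (by simpa [one_def] using hAC)) hX
  · simp

end HilbertBlockOperators

section WeightedShifts

open Filter Topology

lemma eq_zero_of_norm_le_of_mul_eq_mul_succ {w v : ℤ → ℂ} (hv : ∀ n, v n ≠ 0)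
    (hlim : ∀ i j : ℤ, Tendsto
      (fun k : ℕ => ∏ m ∈ Finset.range (k + 1), ‖w (j + (m : ℤ))‖ / ‖v (i + (m : ℤ))‖)
      atTop (𝓝 0))
    {a : ℤ → ℤ → ℂ} {C : ℝ} (ha : ∀ i j, ‖a i j‖ ≤ C)
    (hrec : ∀ i j, v i * a i j = w j * a (i + 1) (j + 1)) (i j : ℤ) : a i j = 0 := by
  have hstep (k : ℕ) : ‖a (i + k) (j + k)‖ =
      ‖w (j + k)‖ / ‖v (i + k)‖ * ‖a (i + (k + 1 : ℕ)) (j + (k + 1 : ℕ))‖ := by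
    have h := congrArg norm (hrec (i + k) (j + k))
    rw [norm_mul, norm_mul] at h
    push_cast
    rw [← add_assoc, ← add_assoc, div_mul_eq_mul_div, eq_div_iff (norm_ne_zero_iff.2 (hv _)), ← h,
      mul_comm]
  have hiter (k : ℕ) : ‖a i j‖ =
      (∏ m ∈ Finset.range k, ‖w (j + m)‖ / ‖v (i + m)‖) * ‖a (i + k) (j + k)‖ := by
    induction k with
    | zero => simp
    | succ k ih => rw [ih, hstep, Finset.prod_range_succ, mul_assoc]
  have hle (k : ℕ) : ‖a i j‖ ≤ (∏ m ∈ Finset.range (k + 1), ‖w (j + m)‖ / ‖v (i + m)‖) * C := by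
    rw [hiter]
    exact mul_le_mul_of_nonneg_left (ha _ _) (by positivity)
  exact norm_le_zero_iff.1 (ge_of_tendsto' (by simpa using (hlim i j).mul_const C) hle)

lemma inner_eb_left (n : ℤ) (f : Hl) : ⟪eb n, f⟫_ℂ = f n := by
  simp [eb, lp.inner_single_left]

lemma inner_eb_eb (n m : ℤ) : ⟪eb n, eb m⟫_ℂ = if n = m then 1 else 0 := by
  rw [inner_eb_left, eb, lp.single_apply]
  split_ifs <;> simp_all

lemma norm_eb (n : ℤ) : ‖eb n‖ = 1 := by
  simp [eb]

lemma eq_zero_of_apply_eb_eq_zero {F : Type*} [NormedAddCommGroup F] [NormedSpace ℂ F]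
    {Y : Hl →L[ℂ] F} (h : ∀ n, Y (eb n) = 0) : Y = 0 := by
  ext f
  have hsum := (lp.hasSum_single ENNReal.ofNat_ne_top f).mapL Y
  have hterm (n : ℤ) : Y (lp.single 2 n (f n)) = 0 := by
    rw [show lp.single 2 n (f n) = (f n • eb n : Hl) by simp [eb, ← lp.single_smul], map_smul, h,
      smul_zero]
  simp only [hterm] at hsum
  simpa using hsum.unique hasSum_zero

lemma adjoint_weightedShift_eb_succ {c : ℤ → ℂ} {S : Hl →L[ℂ] Hl}
    (hS : ∀ n, S (eb n) = c n • eb (n + 1)) (i : ℤ) :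
    adjoint S (eb (i + 1)) = starRingEnd ℂ (c i) • eb i := by
  refine lp.ext (funext fun n => ?_)
  rw [← inner_eb_left, ← inner_eb_left, adjoint_inner_right, hS, inner_smul_left, inner_smul_right,
    inner_eb_eb, inner_eb_eb]
  by_cases h : n = i <;> simp [h]

theorem weightedShift_intertwiner_eq_zero {w v : ℤ → ℂ} (hv : ∀ n, v n ≠ 0)
    {T₀ T₁ : Hl →L[ℂ] Hl} (hT₀ : ∀ n, T₀ (eb n) = w n • eb (n + 1))
    (hT₁ : ∀ n, T₁ (eb n) = v n • eb (n + 1))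
    (hlim : ∀ i j : ℤ, Tendsto
      (fun k : ℕ => ∏ m ∈ Finset.range (k + 1), ‖w (j + (m : ℤ))‖ / ‖v (i + (m : ℤ))‖)
      atTop (𝓝 0))
    {Y : Hl →L[ℂ] Hl} (hY : Y ∘L T₀ = T₁ ∘L Y) : Y = 0 := by
  have hbound (i j : ℤ) : ‖⟪eb i, Y (eb j)⟫_ℂ‖ ≤ ‖Y‖ := by
    simpa [norm_eb] using norm_inner_le_norm (𝕜 := ℂ) (eb i) (Y (eb j)) |>.trans
      (mul_le_mul_of_nonneg_left (Y.le_opNorm _) (norm_nonneg _))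
  have hrec (i j : ℤ) : v i * ⟪eb i, Y (eb j)⟫_ℂ = w j * ⟪eb (i + 1), Y (eb (j + 1))⟫_ℂ := by
    have h := congrArg (⟪eb (i + 1), ·⟫_ℂ) (DFunLike.congr_fun hY (eb j))
    simp only [comp_apply, hT₀, map_smul, inner_smul_right] at h
    rw [h, ← adjoint_inner_left T₁, adjoint_weightedShift_eb_succ hT₁, inner_smul_left,
      Complex.conj_conj]
  refine eq_zero_of_apply_eb_eq_zero fun j => lp.ext (funext fun i => ?_)
  rw [← inner_eb_left]
  exact eq_zero_of_norm_le_of_mul_eq_mul_succ hv hlim hbound hrec i j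

end WeightedShifts

open Filter in
theorem irreducibility_of_T_w_v_d_of_prod_tendsto_zero_general
    (w v : ℤ → ℂ) (hv0 : ∀ n, v n ≠ 0)
    (T0 T1 X : Hl →L[ℂ] Hl)
    (hT0 : ∀ n : ℤ, T0 (eb n) = w n • eb (n + 1))
    (hT1 : ∀ n : ℤ, T1 (eb n) = v n • eb (n + 1))
    (hXT : X.comp T1 ≠ T0.comp X)
    (hIrr0 : IsIrreducibleOp T0) (hIrr1 : IsIrreducibleOp T1)
    (hlim : ∀ i j : ℤ, Tendsto
      (fun k : ℕ => ∏ m ∈ Finset.range (k + 1), ‖w (j + (m : ℤ))‖ / ‖v (i + (m : ℤ))‖)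
      atTop (nhds 0)) :
    IsIrreducibleOp (blockT T0 T1 X) :=
  isIrreducibleOp_blockT2 hIrr0 hIrr1 hXT fun _ hY =>
    weightedShift_intertwiner_eq_zero hv0 hT0 hT1 hlim hY

open Filter in
/-- Proposition 3.9: if `T₀` and `T₁` are irreducible and
`lim_{k→∞} ∏_{m=0}^{k} |w_{j+m}|/|v_{i+m}| = 0` for all `i, j`, then `T(wₙ, vₙ, dₙ)`
is irreducible. -/
theorem irreducibility_of_T_w_v_d_of_prod_tendsto_zero
    (w v : ℤ → ℂ) (hw0 : ∀ n, w n ≠ 0) (hv0 : ∀ n, v n ≠ 0)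
    (hwb : ∃ C : ℝ, ∀ n, ‖w n‖ ≤ C) (hvb : ∃ C : ℝ, ∀ n, ‖v n‖ ≤ C)
    (d : ℤ → ℂ) (hdb : ∃ C : ℝ, ∀ n, ‖d n‖ ≤ C)
    (T0 T1 X : Hl →L[ℂ] Hl)
    (hT0 : ∀ n : ℤ, T0 (eb n) = w n • eb (n + 1))
    (hT1 : ∀ n : ℤ, T1 (eb n) = v n • eb (n + 1))
    (hX : ∀ n : ℤ, X (eb n) = d n • eb n)
    (hXT : X.comp T1 ≠ T0.comp X)
    (hIrr0 : IsIrreducibleOp T0) (hIrr1 : IsIrreducibleOp T1)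
    (hlim : ∀ i j : ℤ, Tendsto
      (fun k : ℕ => ∏ m ∈ Finset.range (k + 1), ‖w (j + (m : ℤ))‖ / ‖v (i + (m : ℤ))‖)
      atTop (nhds 0)) :
    IsIrreducibleOp (blockT T0 T1 X) :=
  irreducibility_of_T_w_v_d_of_prod_tendsto_zero_general w v hv0 T0 T1 X hT0 hT1 hXT hIrr0 hIrr1
    hlim
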